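/- Let U be a ‖·‖₂-ball of radius r around 0 in sp₂(H) on which exp is injective. If g ∈ U₂(H_J) (i.e. g is unitary, commutes with J, and g - 1 is Hilbert-Schmidt) and g = e^y for some y ∈ U, then y* = -y; consequently exp(sp₂(H)_{ah} ∩ U) = U₂(H_J) ∩ exp(U). -/

import Mathlib

open scoped RealInnerProductSpace
open ContinuousLinearMap

noncomputable section

variable {ι H : Type*} [NormedAddCommGroup H] [InnerProductSpace ℝ H] [CompleteSpace H]

/-- `x` is a Hilbert-Schmidt operator (with respect to the Hilbert basis `b`). -/
def IsHS (b : HilbertBasis ι ℝ H) (x : H →L[ℝ] H) : Prop :=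
  Summable fun i => ‖x (b i)‖ ^ 2

/-- The Hilbert-Schmidt norm `‖x‖₂`. -/
def hsNorm (b : HilbertBasis ι ℝ H) (x : H →L[ℝ] H) : ℝ :=
  Real.sqrt (∑' i, ‖x (b i)‖ ^ 2)

/-- The trace inner product `⟨x, y⟩ = Tr (y* x)`. -/
def hsInner (b : HilbertBasis ι ℝ H) (x y : H →L[ℝ] H) : ℝ :=
  ∑' i, ⟪x (b i), y (b i)⟫

/-- `J` is a complex structure: `J² = -1` and `J* = -J`. -/
def IsCplxStruct (J : H →L[ℝ] H) : Prop :=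
  J * J = -1 ∧ star J = -J

/-- The symplectic group `Sp(H)`. -/
def Sp (J : H →L[ℝ] H) : Set (H →L[ℝ] H) :=
  {g | IsUnit g ∧ star g * J * g = J}

/-- The restricted symplectic group `Sp₂(H)`. -/
def Sp2 (b : HilbertBasis ι ℝ H) (J : H →L[ℝ] H) : Set (H →L[ℝ] H) :=
  {g | g ∈ Sp J ∧ IsHS b (g - 1)}

/-- The Banach-Lie algebra `sp₂(H) = {x ∈ B₂(H) : xJ = -Jx*}`. -/
def sp2 (b : HilbertBasis ι ℝ H) (J : H →L[ℝ] H) : Set (H →L[ℝ] H) :=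
  {x | IsHS b x ∧ x * J = -(J * star x)}

/-- The Hermitian part of `sp₂(H)`. -/
def sp2h (b : HilbertBasis ι ℝ H) (J : H →L[ℝ] H) : Set (H →L[ℝ] H) :=
  {x ∈ sp2 b J | IsSelfAdjoint x}

/-- The anti-Hermitian part of `sp₂(H)`. -/
def sp2ah (b : HilbertBasis ι ℝ H) (J : H →L[ℝ] H) : Set (H →L[ℝ] H) :=
  {x ∈ sp2 b J | star x = -x}

/-- The positive part `Sp₂⁺(H)` of the restricted symplectic group. -/
def Sp2pos (b : HilbertBasis ι ℝ H) (J : H →L[ℝ] H) : Set (H →L[ℝ] H) :=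
  {g ∈ Sp2 b J | g.IsPositive}

/-- The restricted unitary group `U₂(H_J)` of unitaries commuting with `J` which are
Hilbert-Schmidt perturbations of the identity. -/
def U2J (b : HilbertBasis ι ℝ H) (J : H →L[ℝ] H) : Set (H →L[ℝ] H) :=
  {u | star u * u = 1 ∧ u * star u = 1 ∧ u * J = J * u ∧ IsHS b (u - 1)}

open scoped Classical in
/-- The positive square root `a^{1/2}` of a positive operator (junk value otherwise). -/
def psqrt (a : H →L[ℝ] H) : H →L[ℝ] H :=
  if h : ∃ s : H →L[ℝ] H, s.IsPositive ∧ s * s = a then h.choose else 0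

/-- A piecewise smooth curve parametrized on `[0,1]`. -/
def PiecewiseSmooth (α : ℝ → (H →L[ℝ] H)) : Prop :=
  ContinuousOn α (Set.Icc 0 1) ∧ ∃ n : ℕ, ∃ t : Fin (n + 1) → ℝ,
    StrictMono t ∧ t 0 = 0 ∧ t (Fin.last n) = 1 ∧
    ∀ i : Fin n, ContDiffOn ℝ 1 α (Set.Icc (t i.castSucc) (t i.succ))

/-- Length of a curve with respect to a metric `F` on tangent vectors. -/
def lengthWith (F : (H →L[ℝ] H) → (H →L[ℝ] H) → ℝ) (α : ℝ → (H →L[ℝ] H)) : ℝ :=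
  ∫ t in (0:ℝ)..1, F (α t) (deriv α t)

/-- Piecewise smooth curves inside `S` joining `p` to `q`. -/
def pathsIn (S : Set (H →L[ℝ] H)) (p q : H →L[ℝ] H) : Set (ℝ → (H →L[ℝ] H)) :=
  {α | PiecewiseSmooth α ∧ (∀ t ∈ Set.Icc (0:ℝ) 1, α t ∈ S) ∧ α 0 = p ∧ α 1 = q}

/-- The geodesic distance in `S` associated to the metric `F`. -/
def gdist (S : Set (H →L[ℝ] H)) (F : (H →L[ℝ] H) → (H →L[ℝ] H) → ℝ)
    (p q : H →L[ℝ] H) : ℝ :=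
  sInf (lengthWith F '' pathsIn S p q)

/-- The left invariant metric `I(g,v) = ‖g⁻¹ v‖₂`. -/
def leftMet (b : HilbertBasis ι ℝ H) : (H →L[ℝ] H) → (H →L[ℝ] H) → ℝ :=
  fun g v => hsNorm b (Ring.inverse g * v)

/-- The metric of positive operators `𝔭(a,x) = ‖a^{-1/2} x a^{-1/2}‖₂`. -/
def posMet (b : HilbertBasis ι ℝ H) : (H →L[ℝ] H) → (H →L[ℝ] H) → ℝ :=
  fun a x => hsNorm b (Ring.inverse (psqrt a) * x * Ring.inverse (psqrt a))

/-- The ambient metric `𝔭_amb(g,x) = ‖x‖₂`. -/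
def ambMet (b : HilbertBasis ι ℝ H) : (H →L[ℝ] H) → (H →L[ℝ] H) → ℝ :=
  fun _ x => hsNorm b x

/-! If `g = e^y` is unitary, then `e^{y*} = g* = g⁻¹ = e^{-y}`. Both `y*` and `-y` lie in the
ball `U`: the Hilbert-Schmidt norm is invariant under adjoints (expand `‖x* bᵢ‖²` by Parseval and
swap the two sums, which is harmless for sums in `ℝ≥0∞`), and `sp₂(H)` is closed under
`x ↦ x* = JxJ`. Injectivity of `exp` on `U` then gives `y* = -y`. Conversely, for anti-Hermitian
`y ∈ sp₂(H)` the operator `e^y` is unitary, commutes with `J` because `y` does, and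
`e^y - 1 = c y` is Hilbert-Schmidt since Hilbert-Schmidt operators form a left ideal. -/

theorem summable_iff_tsum_ofReal_ne_top {α : Type*} {f : α → ℝ} (hf : ∀ i, 0 ≤ f i) :
    Summable f ↔ ∑' i, ENNReal.ofReal (f i) ≠ ⊤ :=
  ⟨Summable.tsum_ofReal_ne_top, fun h => by
    simpa [ENNReal.toReal_ofReal (hf _)] using ENNReal.summable_toReal h⟩

theorem tsum_eq_toReal_tsum_ofReal {α : Type*} {f : α → ℝ} (hf : ∀ i, 0 ≤ f i) :
    ∑' i, f i = (∑' i, ENNReal.ofReal (f i)).toReal := by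
  rw [ENNReal.tsum_toReal_eq fun _ => ENNReal.ofReal_ne_top]
  simp [ENNReal.toReal_ofReal (hf _)]

section ExpSeries

variable {A : Type*} [NormedRing A] [NormedAlgebra ℝ A] [CompleteSpace A]

open NormedSpace Nat in
theorem exists_exp_sub_one_eq_mul (x : A) : ∃ c : A, exp x - 1 = c * x := by
  have hexp := exp_series_hasSum_exp' (𝕂 := ℝ) x
  have hc : Summable fun n : ℕ => ((n + 1)! : ℝ)⁻¹ • x ^ n := by
    refine .of_norm_bounded (norm_expSeries_summable' (𝕂 := ℝ) x) fun n => ?_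
    rw [norm_smul, norm_smul]
    gcongr
    simp only [norm_inv, RCLike.norm_natCast]
    gcongr
    exact n.le_succ
  have hshift : HasSum (fun n : ℕ => ((n + 1)! : ℝ)⁻¹ • x ^ n * x) (exp x - 1) := by
    simpa [pow_succ, smul_mul_assoc] using (hasSum_nat_add_iff' 1).2 hexp
  exact ⟨_, (hc.hasSum.mul_right x).unique hshift |>.symm⟩

end ExpSeries

section Exp

open NormedSpace

variable {A : Type*} [NormedRing A] [NormedAlgebra ℚ A] [CompleteSpace A] [StarRing A]
  [ContinuousStar A]

theorem star_eq_neg_of_exp_mem_unitary {U : Set A} (hinj : U.InjOn exp) {y : A}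
    (hstar : star y ∈ U) (hneg : -y ∈ U) (hy : exp y ∈ unitary A) : star y = -y := by
  refine hinj hstar hneg ?_
  have hinv : exp y * exp (-y) = 1 := by
    rw [← exp_add_of_commute (Commute.refl y).neg_right, add_neg_cancel, exp_zero]
  rw [← star_exp]
  exact left_inv_eq_right_inv (Unitary.star_mul_self_of_mem hy) hinv

end Exp

section HilbertSchmidt

omit [CompleteSpace H] in
theorem HilbertBasis.tsum_ofReal_inner_sq (b : HilbertBasis ι ℝ H) (v : H) :
    ∑' i, ENNReal.ofReal (⟪b i, v⟫ ^ 2) = ENNReal.ofReal (‖v‖ ^ 2) := by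
  have h := b.hasSum_inner_mul_inner v v
  simp_rw [real_inner_self_eq_norm_sq, real_inner_comm (b _) v, ← sq] at h
  rw [← h.tsum_eq, ENNReal.ofReal_tsum_of_nonneg (fun _ => sq_nonneg _) h.summable]

variable (b : HilbertBasis ι ℝ H)

theorem tsum_ofReal_norm_sq_star_apply (x : H →L[ℝ] H) :
    ∑' i, ENNReal.ofReal (‖star x (b i)‖ ^ 2) = ∑' i, ENNReal.ofReal (‖x (b i)‖ ^ 2) := by
  calc ∑' i, ENNReal.ofReal (‖star x (b i)‖ ^ 2)
      = ∑' i, ∑' j, ENNReal.ofReal (⟪b i, x (b j)⟫ ^ 2) := by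
        refine tsum_congr fun i => ?_
        simp_rw [← b.tsum_ofReal_inner_sq, star_eq_adjoint, adjoint_inner_right, real_inner_comm]
    _ = ∑' j, ENNReal.ofReal (‖x (b j)‖ ^ 2) := by
        rw [ENNReal.tsum_comm]
        exact tsum_congr fun j => b.tsum_ofReal_inner_sq _

theorem isHS_star_iff {x : H →L[ℝ] H} : IsHS b (star x) ↔ IsHS b x := by
  simp only [IsHS, summable_iff_tsum_ofReal_ne_top fun _ => sq_nonneg _,
    tsum_ofReal_norm_sq_star_apply]

theorem hsNorm_star (x : H →L[ℝ] H) : hsNorm b (star x) = hsNorm b x := by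
  simp only [hsNorm, tsum_eq_toReal_tsum_ofReal fun _ => sq_nonneg _,
    tsum_ofReal_norm_sq_star_apply]

omit [CompleteSpace H] in
theorem isHS_neg_iff {x : H →L[ℝ] H} : IsHS b (-x) ↔ IsHS b x := by
  simp [IsHS]

omit [CompleteSpace H] in
theorem hsNorm_neg (x : H →L[ℝ] H) : hsNorm b (-x) = hsNorm b x := by
  simp [hsNorm]

omit [CompleteSpace H] in
theorem IsHS.mul_left {x : H →L[ℝ] H} (c : H →L[ℝ] H) (hx : IsHS b x) : IsHS b (c * x) := by
  refine .of_nonneg_of_le (fun _ => sq_nonneg _) (fun i => ?_)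
    (Summable.mul_left (‖c‖ ^ 2) hx)
  rw [← mul_pow]
  gcongr
  exact c.le_opNorm _

end HilbertSchmidt

section Symplectic

variable (b : HilbertBasis ι ℝ H) {J : H →L[ℝ] H}

theorem star_mem_sp2 (hJ : J * J = -1) {x : H →L[ℝ] H} (hx : x ∈ sp2 b J) :
    star x ∈ sp2 b J := by
  have hstar : star x = J * x * J := by
    rw [mul_assoc, hx.2, mul_neg, ← mul_assoc, hJ, neg_mul, one_mul, neg_neg]
  refine ⟨(isHS_star_iff b).2 hx.1, ?_⟩
  rw [star_star, hstar, mul_assoc _ J, hJ, mul_neg_one]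

theorem neg_mem_sp2 {x : H →L[ℝ] H} (hx : x ∈ sp2 b J) : -x ∈ sp2 b J :=
  ⟨(isHS_neg_iff b).2 hx.1, by rw [star_neg, neg_mul, hx.2, mul_neg]⟩

theorem commute_of_mem_sp2ah {x : H →L[ℝ] H} (hx : x ∈ sp2ah b J) : Commute x J := by
  have h := hx.1.2
  rwa [hx.2, mul_neg, neg_neg] at h

theorem mem_U2J_iff {u : H →L[ℝ] H} :
    u ∈ U2J b J ↔ u ∈ unitary (H →L[ℝ] H) ∧ Commute u J ∧ IsHS b (u - 1) := by
  rw [Unitary.mem_iff, and_assoc]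
  rfl

theorem exp_mem_U2J {x : H →L[ℝ] H} (hx : x ∈ sp2ah b J) : NormedSpace.exp x ∈ U2J b J := by
  let _ : NormedAlgebra ℚ (H →L[ℝ] H) := .restrictScalars ℚ ℝ _
  obtain ⟨c, hc⟩ := exists_exp_sub_one_eq_mul x
  exact (mem_U2J_iff b).2
    ⟨NormedSpace.exp_mem_unitary_of_mem_skewAdjoint (skewAdjoint.mem_iff.2 hx.2),
      (commute_of_mem_sp2ah b hx).exp_left, hc ▸ hx.1.1.mul_left b c⟩

end Symplectic

/-- on a ball `U` where `exp` is injective, a unitary `g = e^y ∈ U₂(H_J)`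
with `y ∈ U` forces `y* = -y`, and `exp (sp₂(H)_{ah} ∩ U) = U₂(H_J) ∩ exp U`. -/
theorem exp_sp2ah_eq_U2J_inter (b : HilbertBasis ι ℝ H) (J : H →L[ℝ] H)
    (hJ : IsCplxStruct J) (r : ℝ) (U : Set (H →L[ℝ] H))
    (hU : U = {x ∈ sp2 b J | hsNorm b x < r})
    (hinj : Set.InjOn (NormedSpace.exp) U) :
    (∀ g ∈ U2J b J, ∀ y ∈ U, g = NormedSpace.exp y → star y = -y) ∧
    NormedSpace.exp '' (sp2ah b J ∩ U) = U2J b J ∩ NormedSpace.exp '' U := by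
  let _ : NormedAlgebra ℚ (H →L[ℝ] H) := .restrictScalars ℚ ℝ _
  have hsp2 : ∀ y ∈ U, y ∈ sp2 b J := fun y hy => (hU ▸ hy).1
  have hball : ∀ y ∈ U, star y ∈ U ∧ -y ∈ U := by
    subst hU
    exact fun y hy => ⟨⟨star_mem_sp2 b hJ.1 hy.1, (hsNorm_star b y).symm ▸ hy.2⟩,
      ⟨neg_mem_sp2 b hy.1, (hsNorm_neg b y).symm ▸ hy.2⟩⟩
  have hskew : ∀ g ∈ U2J b J, ∀ y ∈ U, g = NormedSpace.exp y → star y = -y := by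
    rintro _ hg y hy rfl
    exact star_eq_neg_of_exp_mem_unitary hinj (hball y hy).1 (hball y hy).2
      ((mem_U2J_iff b).1 hg).1
  refine ⟨hskew, Set.Subset.antisymm ?_ ?_⟩
  · rintro _ ⟨y, ⟨hy, hyU⟩, rfl⟩
    exact ⟨exp_mem_U2J b hy, y, hyU, rfl⟩
  · rintro _ ⟨hg, y, hyU, rfl⟩
    exact ⟨y, ⟨⟨hsp2 y hyU, hskew _ hg y hyU rfl⟩, hyU⟩, rfl⟩

end
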